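/- For positive integers a, y, z, the following ratio of Pochhammer products equals (z+a-1)/(y+z+a-1): (∏_{i=1}^{a-1}(z+i)_{y+a-2i} · ∏_{i=1}^{a}(z-1+i)_{y+a-2i+1}) / (∏_{i=1}^{a}(z+i)_{y+a-2i+1} · ∏_{i=1}^{a-1}(z-1+i)_{y+a-2i}). -/
import Mathlib


open Finset

/-- Pochhammer symbol `(x)_n = x(x+1)⋯(x+n-1)`, extended to negative indices by
`(x)_{-n} = 1/((x-1)(x-2)⋯(x-n))`. -/
def poch (x : ℚ) (n : ℤ) : ℚ :=
  if 0 ≤ n then ∏ i ∈ Finset.range n.toNat, (x + i)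
  else (∏ i ∈ Finset.range (-n).toNat, (x - (i + 1)))⁻¹

/-- Skipped Pochhammer symbol `[x]_n = x(x+2)⋯(x+2(n-1))`, extended to negative indices by
`[x]_{-n} = 1/((x-2)(x-4)⋯(x-2n))`. -/
def spoch (x : ℚ) (n : ℤ) : ℚ :=
  if 0 ≤ n then ∏ i ∈ Finset.range n.toNat, (x + 2 * i)
  else (∏ i ∈ Finset.range (-n).toNat, (x - 2 * (i + 1)))⁻¹

-- key product identity
lemma prod_shift (f : ℕ → ℚ) (m : ℕ) :
    f 0 * ∏ i ∈ range m, f (i + 1) = (∏ i ∈ range m, f i) * f m := by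
  rw [mul_comm, ← prod_range_succ', prod_range_succ]

lemma poch_shift (x : ℚ) (n : ℤ) (h1 : poch x n ≠ 0) (h2 : poch (x - 1) n ≠ 0) :
    poch x n * (x - 1) = poch (x - 1) n * (x + n - 1) := by
  unfold poch at *
  by_cases hn : 0 ≤ n
  · simp only [if_pos hn] at *
    have hc : ((n : ℚ)) = (n.toNat : ℚ) := by
      exact_mod_cast congrArg (Int.cast : ℤ → ℚ) (Int.toNat_of_nonneg hn).symm
    rw [hc]
    have := prod_shift (fun i => x - 1 + i) n.toNat
    have e1 : ∏ i ∈ range n.toNat, (x + (i:ℚ)) = ∏ i ∈ range n.toNat, (x - 1 + ((i+1 : ℕ) : ℚ)) := by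
      apply prod_congr rfl; intro i _; push_cast; ring
    rw [e1]
    calc (∏ i ∈ range n.toNat, (x - 1 + ((i+1:ℕ):ℚ))) * (x - 1)
        = (x - 1 + (0:ℕ)) * ∏ i ∈ range n.toNat, (x - 1 + ((i+1:ℕ):ℚ)) := by
          push_cast; ring
      _ = (∏ i ∈ range n.toNat, (x - 1 + i)) * (x - 1 + n.toNat) := by
          simpa using prod_shift (fun i => x - 1 + (i:ℚ)) n.toNat
      _ = (∏ i ∈ range n.toNat, (x - 1 + i)) * (x + (n.toNat:ℚ) - 1) := by ring
  · simp only [if_neg hn] at *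
    set m := (-n).toNat with hm
    have hmn : ((n : ℚ)) = -(m : ℚ) := by
      have : ((-n).toNat : ℤ) = -n := Int.toNat_of_nonneg (by omega)
      push_cast [hm]
      exact_mod_cast (by omega : (n:ℤ) = -((-n).toNat : ℤ))
    have hP : (∏ i ∈ range m, (x - ((i:ℚ) + 1))) ≠ 0 := by
      intro h; exact h1 (by rw [h, inv_zero])
    have hQ : (∏ i ∈ range m, (x - 1 - ((i:ℚ) + 1))) ≠ 0 := by
      intro h; exact h2 (by rw [h, inv_zero])
    have key : (x - 1) * ∏ i ∈ range m, (x - 1 - ((i:ℚ) + 1))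
        = (∏ i ∈ range m, (x - ((i:ℚ) + 1))) * (x - ((m:ℚ) + 1)) := by
      have e1 : ∏ i ∈ range m, (x - 1 - ((i:ℚ) + 1)) = ∏ i ∈ range m, (x - (((i+1:ℕ):ℚ) + 1)) := by
        apply prod_congr rfl; intro i _; push_cast; ring
      rw [e1]
      have := prod_shift (fun i => x - ((i:ℚ) + 1)) m
      simpa using this
    rw [hmn]
    field_simp
    linear_combination key

lemma icc_range (f : ℕ → ℚ) (n : ℕ) : ∏ i ∈ Icc 1 n, f i = ∏ i ∈ range n, f (i + 1) := by
  rw [← Finset.Ico_add_one_right_eq_Icc, prod_Ico_eq_prod_range]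
  simp [add_comm]

theorem pochhammer_ratio_p1verify5_first (y z a : ℕ) (hy : 1 ≤ y) (hz : 1 ≤ z) (ha : 1 ≤ a)
    (hN : (∏ i ∈ Icc 1 (a - 1), poch ((z : ℚ) + i) ((y : ℤ) + a - 2 * i)) *
        (∏ i ∈ Icc 1 a, poch ((z : ℚ) - 1 + i) ((y : ℤ) + a - 2 * i + 1)) ≠ 0)
    (hD : (∏ i ∈ Icc 1 a, poch ((z : ℚ) + i) ((y : ℤ) + a - 2 * i + 1)) *
        (∏ i ∈ Icc 1 (a - 1), poch ((z : ℚ) - 1 + i) ((y : ℤ) + a - 2 * i)) ≠ 0) :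
    ((∏ i ∈ Icc 1 (a - 1), poch ((z : ℚ) + i) ((y : ℤ) + a - 2 * i)) *
        (∏ i ∈ Icc 1 a, poch ((z : ℚ) - 1 + i) ((y : ℤ) + a - 2 * i + 1))) /
      ((∏ i ∈ Icc 1 a, poch ((z : ℚ) + i) ((y : ℤ) + a - 2 * i + 1)) *
        (∏ i ∈ Icc 1 (a - 1), poch ((z : ℚ) - 1 + i) ((y : ℤ) + a - 2 * i)))
      = ((z : ℚ) + a - 1) / ((y : ℚ) + z + a - 1) := by
  obtain ⟨b, rfl⟩ : ∃ b, a = b + 1 := ⟨a - 1, (Nat.succ_pred_eq_of_pos ha).symm⟩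
  simp only [Nat.add_sub_cancel] at hN hD ⊢
  simp only [icc_range] at hN hD ⊢
  have hz1 : (1:ℚ) ≤ (z:ℚ) := by exact_mod_cast hz
  have hy1 : (1:ℚ) ≤ (y:ℚ) := by exact_mod_cast hy
  obtain ⟨hC0, hB0⟩ := mul_ne_zero_iff.mp hN
  obtain ⟨hA0, hE0⟩ := mul_ne_zero_iff.mp hD
  have hA1 := Finset.prod_ne_zero_iff.mp hA0
  have hB1 := Finset.prod_ne_zero_iff.mp hB0
  have hC1 := Finset.prod_ne_zero_iff.mp hC0
  have hE1 := Finset.prod_ne_zero_iff.mp hE0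
  have hrel1 : ∀ i ∈ range (b+1),
      poch ((z:ℚ) + ((i+1 : ℕ):ℚ)) ((y:ℤ) + ((b+1 : ℕ):ℤ) - 2 * ((i+1:ℕ):ℤ) + 1) * ((z:ℚ) + (i:ℚ))
      = poch ((z:ℚ) - 1 + ((i+1 : ℕ):ℚ)) ((y:ℤ) + ((b+1 : ℕ):ℤ) - 2 * ((i+1:ℕ):ℤ) + 1)
          * ((z:ℚ) + (y:ℚ) + (b:ℚ) - (i:ℚ)) := by
    intro i hi
    have e1 : (z:ℚ) + ((i+1 : ℕ):ℚ) - 1 = (z:ℚ) - 1 + ((i+1 : ℕ):ℚ) := by push_cast; ring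
    have h := poch_shift ((z:ℚ) + ((i+1 : ℕ):ℚ)) ((y:ℤ) + ((b+1 : ℕ):ℤ) - 2 * ((i+1:ℕ):ℤ) + 1)
      (hA1 i hi) (by rw [e1]; exact hB1 i hi)
    rw [e1] at h
    have e2 : (z:ℚ) + (i:ℚ) = (z:ℚ) - 1 + ((i+1 : ℕ):ℚ) := by push_cast; ring
    have e3 : (z:ℚ) + (y:ℚ) + (b:ℚ) - (i:ℚ)
        = (z:ℚ) + ((i+1 : ℕ):ℚ) + (((y:ℤ) + ((b+1 : ℕ):ℤ) - 2 * ((i+1:ℕ):ℤ) + 1 : ℤ):ℚ) - 1 := by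
      push_cast; ring
    rw [e2, e3]; exact h
  have hrel2 : ∀ i ∈ range b,
      poch ((z:ℚ) + ((i+1 : ℕ):ℚ)) ((y:ℤ) + ((b+1 : ℕ):ℤ) - 2 * ((i+1:ℕ):ℤ)) * ((z:ℚ) + (i:ℚ))
      = poch ((z:ℚ) - 1 + ((i+1 : ℕ):ℚ)) ((y:ℤ) + ((b+1 : ℕ):ℤ) - 2 * ((i+1:ℕ):ℤ))
          * ((z:ℚ) + (y:ℚ) + (b:ℚ) - 1 - (i:ℚ)) := by
    intro i hi
    have e1 : (z:ℚ) + ((i+1 : ℕ):ℚ) - 1 = (z:ℚ) - 1 + ((i+1 : ℕ):ℚ) := by push_cast; ring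
    have h := poch_shift ((z:ℚ) + ((i+1 : ℕ):ℚ)) ((y:ℤ) + ((b+1 : ℕ):ℤ) - 2 * ((i+1:ℕ):ℤ))
      (hC1 i hi) (by rw [e1]; exact hE1 i hi)
    rw [e1] at h
    have e2 : (z:ℚ) + (i:ℚ) = (z:ℚ) - 1 + ((i+1 : ℕ):ℚ) := by push_cast; ring
    have e3 : (z:ℚ) + (y:ℚ) + (b:ℚ) - 1 - (i:ℚ)
        = (z:ℚ) + ((i+1 : ℕ):ℚ) + (((y:ℤ) + ((b+1 : ℕ):ℤ) - 2 * ((i+1:ℕ):ℤ) : ℤ):ℚ) - 1 := by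
      push_cast; ring
    rw [e2, e3]; exact h
  have H1 : (∏ i ∈ range (b+1), poch ((z:ℚ) + ((i+1 : ℕ):ℚ)) ((y:ℤ) + ((b+1 : ℕ):ℤ) - 2 * ((i+1:ℕ):ℤ) + 1))
        * (∏ i ∈ range (b+1), ((z:ℚ) + (i:ℚ)))
      = (∏ i ∈ range (b+1), poch ((z:ℚ) - 1 + ((i+1 : ℕ):ℚ)) ((y:ℤ) + ((b+1 : ℕ):ℤ) - 2 * ((i+1:ℕ):ℤ) + 1))
        * (∏ i ∈ range (b+1), ((z:ℚ) + (y:ℚ) + (b:ℚ) - (i:ℚ))) := by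
    rw [← prod_mul_distrib, ← prod_mul_distrib]; exact prod_congr rfl hrel1
  have H2 : (∏ i ∈ range b, poch ((z:ℚ) + ((i+1 : ℕ):ℚ)) ((y:ℤ) + ((b+1 : ℕ):ℤ) - 2 * ((i+1:ℕ):ℤ)))
        * (∏ i ∈ range b, ((z:ℚ) + (i:ℚ)))
      = (∏ i ∈ range b, poch ((z:ℚ) - 1 + ((i+1 : ℕ):ℚ)) ((y:ℤ) + ((b+1 : ℕ):ℤ) - 2 * ((i+1:ℕ):ℤ)))
        * (∏ i ∈ range b, ((z:ℚ) + (y:ℚ) + (b:ℚ) - 1 - (i:ℚ))) := by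
    rw [← prod_mul_distrib, ← prod_mul_distrib]; exact prod_congr rfl hrel2
  have hf : ∏ i ∈ range (b+1), ((z:ℚ) + (i:ℚ))
      = (∏ i ∈ range b, ((z:ℚ) + (i:ℚ))) * ((z:ℚ) + (b:ℚ)) := prod_range_succ _ _
  have hg : ∏ i ∈ range (b+1), ((z:ℚ) + (y:ℚ) + (b:ℚ) - (i:ℚ))
      = (∏ i ∈ range b, ((z:ℚ) + (y:ℚ) + (b:ℚ) - 1 - (i:ℚ))) * ((z:ℚ) + (y:ℚ) + (b:ℚ)) := by
    rw [prod_range_succ']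
    congr 1
    · apply prod_congr rfl; intro i _; push_cast; ring
    · push_cast; ring
  have hg' : (∏ i ∈ range b, ((z:ℚ) + (y:ℚ) + (b:ℚ) - 1 - (i:ℚ))) ≠ 0 := by
    apply Finset.prod_ne_zero_iff.mpr
    intro i hi
    have hib : (i:ℚ) + 1 ≤ (b:ℚ) := by exact_mod_cast Finset.mem_range.mp hi
    intro h; nlinarith
  have hw : ((y:ℚ) + (z:ℚ) + ((b+1:ℕ):ℚ) - 1) ≠ 0 := by
    have hb0 : (0:ℚ) ≤ (b:ℚ) := by positivity
    push_cast
    intro h; nlinarith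
  rw [div_eq_div_iff hD hw]
  have hcast1 : (y:ℚ) + (z:ℚ) + ((b+1:ℕ):ℚ) - 1 = (z:ℚ) + (y:ℚ) + (b:ℚ) := by push_cast; ring
  have hcast2 : (z:ℚ) + ((b+1:ℕ):ℚ) - 1 = (z:ℚ) + (b:ℚ) := by push_cast; ring
  rw [hcast1, hcast2]
  apply mul_right_cancel₀ hg'
  rw [hf, hg] at H1
  linear_combination
    (((z:ℚ) + (b:ℚ)) * (∏ i ∈ range (b+1), poch ((z:ℚ) + ((i+1 : ℕ):ℚ)) ((y:ℤ) + ((b+1 : ℕ):ℤ) - 2 * ((i+1:ℕ):ℤ) + 1))) * H2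
    - (∏ i ∈ range b, poch ((z:ℚ) + ((i+1 : ℕ):ℚ)) ((y:ℤ) + ((b+1 : ℕ):ℤ) - 2 * ((i+1:ℕ):ℤ))) * H1
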